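/- Let n ≥ 1 be an integer. The second derivative of V_n at 0 equals −4·∏_{k=1}^n (k−1/2)⁴ · Σ_{k=1}^n (k−1/2)^{−2}; in particular V_n''(0) < 0. -/

import Mathlib

/-! Every factor `(x² − c²)²` of `V_n` has a critical point at `0`, so in the Leibniz expansion
of `V_n''(0)` only the terms differentiating one factor twice survive: the factor with centre `c`
contributes `−4c²` times the product `∏ c_j⁴` of the values of the other factors at `0`. -/

open Finset

/-- The φ^{4n} potential `V_n(x) = ∏_{k=1}^n (x² − (k−1/2)²)²`. -/
noncomputable def Vn (n : ℕ) : ℝ → ℝ :=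
  fun x => ∏ k ∈ Finset.Icc 1 n, (x ^ 2 - ((k : ℝ) - 1 / 2) ^ 2) ^ 2

section

variable {𝕜 : Type*} [NontriviallyNormedField 𝕜]

theorem deriv_deriv_finsetProd_of_deriv_eq_zero {𝔸 : Type*} [NormedCommRing 𝔸]
    [NormedAlgebra 𝕜 𝔸] {ι : Type*} [DecidableEq ι] (s : Finset ι) {f f' : ι → 𝕜 → 𝔸}
    {f'' : ι → 𝔸} {x : 𝕜} (hf : ∀ i ∈ s, ∀ y, HasDerivAt (f i) (f' i y) y)
    (hf' : ∀ i ∈ s, HasDerivAt (f' i) (f'' i) x) (hcrit : ∀ i ∈ s, f' i x = 0) :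
    deriv (deriv (∏ i ∈ s, f i ·)) x = ∑ i ∈ s, (∏ j ∈ s.erase i, f j x) * f'' i := by
  have hderiv : deriv (∏ i ∈ s, f i ·) = fun y => ∑ i ∈ s, (∏ j ∈ s.erase i, f j y) * f' i y :=
    funext fun y => by simpa using (HasDerivAt.fun_finsetProd fun i hi => hf i hi y).deriv
  rw [hderiv]
  refine (HasDerivAt.fun_sum fun i hi => ?_).deriv
  have hprod := HasDerivAt.fun_finsetProd (u := s.erase i) fun j hj => hf j (mem_of_mem_erase hj) x
  exact (hprod.fun_mul (hf' i hi)).congr_deriv (by simp [hcrit i hi])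

theorem hasDerivAt_sq_sub_sq_sq (c x : 𝕜) :
    HasDerivAt (fun y => (y ^ 2 - c ^ 2) ^ 2) (4 * x * (x ^ 2 - c ^ 2)) x := by
  refine (((hasDerivAt_pow 2 x).sub_const (c ^ 2)).fun_pow 2).congr_deriv ?_
  push_cast
  ring

theorem hasDerivAt_mul_sq_sub_sq_zero (c : 𝕜) :
    HasDerivAt (fun y => 4 * y * (y ^ 2 - c ^ 2)) (-4 * c ^ 2) 0 := by
  refine (((hasDerivAt_id (0 : 𝕜)).const_mul 4).fun_mul
    ((hasDerivAt_pow 2 (0 : 𝕜)).sub_const (c ^ 2))).congr_deriv ?_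
  simp

theorem deriv_deriv_prod_sq_sub_sq_sq_zero {ι : Type*} [DecidableEq ι] (s : Finset ι) {c : ι → 𝕜}
    (hc : ∀ i ∈ s, c i ≠ 0) :
    deriv (deriv fun x => ∏ i ∈ s, (x ^ 2 - c i ^ 2) ^ 2) 0 =
      -4 * (∏ i ∈ s, c i ^ 4) * ∑ i ∈ s, (c i ^ 2)⁻¹ := by
  rw [deriv_deriv_finsetProd_of_deriv_eq_zero s (fun i _ => hasDerivAt_sq_sub_sq_sq (c i))
    (fun i _ => hasDerivAt_mul_sq_sub_sq_zero (c i)) (by simp), mul_sum]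
  refine sum_congr rfl fun i hi => ?_
  rw [← mul_prod_erase s (fun j => c j ^ 4) hi]
  have hzero : ∀ j, ((0 : 𝕜) ^ 2 - c j ^ 2) ^ 2 = c j ^ 4 := fun j => by ring
  simp only [hzero]
  field_simp [hc i hi]

end

theorem stmt15 (n : ℕ) (hn : 1 ≤ n) :
    deriv (deriv (Vn n)) 0 =
      -4 * (∏ k ∈ Finset.Icc 1 n, ((k : ℝ) - 1 / 2) ^ 4) *
        (∑ k ∈ Finset.Icc 1 n, (((k : ℝ) - 1 / 2) ^ 2)⁻¹) ∧
    deriv (deriv (Vn n)) 0 < 0 := by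
  have hc : ∀ k ∈ Icc 1 n, (0 : ℝ) < (k : ℝ) - 1 / 2 := fun k hk => by
    have : (1 : ℝ) ≤ k := mod_cast (mem_Icc.mp hk).1
    linarith
  have hV := deriv_deriv_prod_sq_sub_sq_sq_zero (Icc 1 n) fun k hk => (hc k hk).ne'
  refine ⟨hV, hV ▸ mul_neg_of_neg_of_pos ?_ ?_⟩
  · exact mul_neg_of_neg_of_pos (by norm_num) (prod_pos fun k hk => pow_pos (hc k hk) 4)
  · exact sum_pos (fun k hk => inv_pos.mpr (pow_pos (hc k hk) 2)) ⟨1, mem_Icc.mpr ⟨le_rfl, hn⟩⟩
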